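/- For nonzero z ∈ F_8, the F_2-linear span (under symmetric difference) of O_z = {X ⊆ F_8 : |X| = 4, Σ_{x∈X} x = z} consists exactly of the 16 sets: ∅, F_8, the 8 elements of O_z, the three lines through 0 containing z (i.e., the three 2-dimensional F_2-subspaces of F_8 containing z), and the complements of these three lines. -/

import Mathlib

/-!
Everything in the statement is invariant under linear equivalences, and a linear equivalence
`F8 ≃ F₂³` can be chosen to send `z` to the first basis vector. Over `F₂` the span of a finite set
is the set of its subset sums, so on `F₂³` the claim becomes an equality of two explicit finite sets
of functions: the `2⁸` subset sums of the eight outer indicators, and the sixteen listed functions.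
The kernel checks it by evaluation.
-/

open scoped Classical
noncomputable section

abbrev F8 := GaloisField 2 3

instance : Fintype F8 := Fintype.ofFinite F8

/-- The indicator function of a subset of `F8`, as a vector in `F₂⁸`. -/
def ind (S : Set F8) : F8 → ZMod 2 := fun w => if w ∈ S then 1 else 0

open Module Submodule

theorem ZMod.eq_zero_or_eq_one (a : ZMod 2) : a = 0 ∨ a = 1 := by
  revert a
  decide

section SpanOverZModTwo

variable {M : Type*} [AddCommGroup M] [Module (ZMod 2) M]

theorem ZModModule.mem_span_finset_iff_exists_subset_sum {s : Finset M} {x : M} :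
    x ∈ span (ZMod 2) (s : Set M) ↔ ∃ t ⊆ s, ∑ y ∈ t, y = x := by
  constructor
  · rw [mem_span_finset]
    rintro ⟨c, -, rfl⟩
    refine ⟨s.filter (c · = 1), Finset.filter_subset _ _, ?_⟩
    rw [Finset.sum_filter]
    refine Finset.sum_congr rfl fun y _ => ?_
    rcases ZMod.eq_zero_or_eq_one (c y) with h | h <;> simp [h]
  · rintro ⟨t, hts, rfl⟩
    exact sum_mem fun y hy => subset_span (hts hy)

theorem ZModModule.coe_span_finset_eq_image_sum [DecidableEq M] (s : Finset M) :
    (span (ZMod 2) (s : Set M) : Set M) = ↑(s.powerset.image fun t => ∑ y ∈ t, y) := by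
  ext x
  simp [ZModModule.mem_span_finset_iff_exists_subset_sum]

end SpanOverZModTwo

theorem Finset.piecewise_zero_eq_indicator {α M : Type*} [Zero M] [DecidableEq α] (X : Finset α)
    (f : α → M) : X.piecewise f 0 = (X : Set α).indicator f := by
  rw [← Finset.piecewise_coe, Set.piecewise_eq_indicator]

section Transport

variable {V W : Type*} [AddCommGroup V] [Module (ZMod 2) V] [AddCommGroup W] [Module (ZMod 2) W]

def outerIndicators (z : V) : Set (V → ZMod 2) :=
  {f | ∃ X : Finset V, X.card = 4 ∧ ∑ x ∈ X, x = z ∧ f = (X : Set V).indicator 1}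

def outerSpanCandidates (z : V) : Set (V → ZMod 2) :=
  {f | f = 0 ∨ f = 1 ∨ f ∈ outerIndicators z ∨
    ∃ L : Submodule (ZMod 2) V, finrank (ZMod 2) L = 2 ∧ z ∈ L ∧
      (f = (L : Set V).indicator 1 ∨ f = (L : Set V)ᶜ.indicator 1)}

theorem Set.indicator_one_comp_symm {α β M : Type*} [Zero M] [One M] (e : α ≃ β)
    (S : Set α) :
    S.indicator (1 : α → M) ∘ e.symm = (e '' S).indicator 1 := by
  ext w
  simp [Set.indicator_apply, e.image_eq_preimage_symm]

variable (e : V ≃ₗ[ZMod 2] W) {z : V} {f : V → ZMod 2}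

theorem comp_symm_mem_outerIndicators (hf : f ∈ outerIndicators z) :
    f ∘ e.symm ∈ outerIndicators (e z) := by
  obtain ⟨X, hcard, hsum, rfl⟩ := hf
  refine ⟨X.map e.toEquiv.toEmbedding, by simpa using hcard, ?_, ?_⟩
  · simp [Finset.sum_map, ← hsum]
  · simpa using Set.indicator_one_comp_symm e.toEquiv X

theorem comp_symm_mem_span_outerIndicators (hf : f ∈ span (ZMod 2) (outerIndicators z)) :
    f ∘ e.symm ∈ span (ZMod 2) (outerIndicators (e z)) := by
  let Φ := LinearEquiv.funCongrLeft (ZMod 2) (ZMod 2) e.toEquiv.symm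
  refine span_mono ?_ (apply_mem_span_image_of_mem_span Φ.toLinearMap hf)
  rintro _ ⟨g, hg, rfl⟩
  exact comp_symm_mem_outerIndicators e hg

theorem comp_symm_mem_outerSpanCandidates (hf : f ∈ outerSpanCandidates z) :
    f ∘ e.symm ∈ outerSpanCandidates (e z) := by
  rcases hf with rfl | rfl | hf | ⟨L, hL, hzL, hf⟩
  · exact Or.inl rfl
  · exact Or.inr (Or.inl rfl)
  · exact Or.inr (Or.inr (Or.inl (comp_symm_mem_outerIndicators e hf)))
  refine Or.inr (Or.inr (Or.inr ⟨L.map (e : V →ₗ[ZMod 2] W),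
    by rw [LinearEquiv.finrank_map_eq, hL], mem_map_of_mem hzL, ?_⟩))
  have hcoe : (L.map (e : V →ₗ[ZMod 2] W) : Set W) = e.toEquiv '' L := map_coe _ _
  rcases hf with rfl | rfl
  · exact Or.inl (by rw [hcoe]; exact Set.indicator_one_comp_symm e.toEquiv _)
  · refine Or.inr ?_
    rw [hcoe, ← Set.image_compl_eq e.toEquiv.bijective]
    exact Set.indicator_one_comp_symm e.toEquiv _

theorem coe_span_outerIndicators_of_linearEquiv
    (h : (span (ZMod 2) (outerIndicators (e z)) : Set (W → ZMod 2)) = outerSpanCandidates (e z)) :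
    (span (ZMod 2) (outerIndicators z) : Set (V → ZMod 2)) = outerSpanCandidates z := by
  have hback (g : V → ZMod 2) : (g ∘ e.symm) ∘ e.symm.symm = g := by ext; simp
  ext f
  constructor
  · intro hf
    rw [← hback f, ← e.symm_apply_apply z]
    apply comp_symm_mem_outerSpanCandidates e.symm
    rw [← h]
    exact comp_symm_mem_span_outerIndicators e hf
  · intro hf
    rw [SetLike.mem_coe, ← hback f, ← e.symm_apply_apply z]
    apply comp_symm_mem_span_outerIndicators e.symm
    rw [← SetLike.mem_coe, h]
    exact comp_symm_mem_outerSpanCandidates e hf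

end Transport

theorem finrank_eq_two_iff_card_eq_four {V : Type*} [AddCommGroup V] [Module (ZMod 2) V]
    [Finite V] {L : Submodule (ZMod 2) V} {S : Finset V}
    (hLS : (S : Set V) = L) : finrank (ZMod 2) L = 2 ↔ S.card = 4 := by
  have hcard : Nat.card L = S.card := by rw [← Set.ncard_coe_finset, hLS]; rfl
  rw [← hcard, natCard_eq_pow_finrank (K := ZMod 2), Nat.card_zmod,
    show (4 : ℕ) = 2 ^ 2 by norm_num, Nat.pow_right_inj one_lt_two]

section Finite

variable {V : Type*} [AddCommGroup V] [Fintype V] [DecidableEq V]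

def outerFinsets (z : V) : Finset (Finset V) :=
  {X | X.card = 4 ∧ ∑ x ∈ X, x = z}

def lineFinsets (z : V) : Finset (Finset V) :=
  {S | S.card = 4 ∧ 0 ∈ S ∧ z ∈ S ∧ ∀ a ∈ S, ∀ b ∈ S, a + b ∈ S}

def outerSpanCandidateFinset (z : V) : Finset (V → ZMod 2) :=
  {0, 1} ∪ (outerFinsets z).image (·.piecewise 1 0) ∪
    (lineFinsets z).image (·.piecewise 1 0) ∪ (lineFinsets z).image (·ᶜ.piecewise 1 0)

theorem outerIndicators_eq_coe_image (z : V) :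
    outerIndicators z = ↑((outerFinsets z).image fun X => X.piecewise (1 : V → ZMod 2) 0) := by
  ext f
  simp [outerIndicators, outerFinsets, Finset.piecewise_zero_eq_indicator, eq_comm, and_assoc]

variable [Module (ZMod 2) V]

theorem exists_submodule_finrank_two_iff (z : V) (P : Set V → Prop) :
    (∃ L : Submodule (ZMod 2) V, finrank (ZMod 2) L = 2 ∧ z ∈ L ∧ P L) ↔
      ∃ S ∈ lineFinsets z, P S := by
  simp only [lineFinsets, Finset.mem_filter, Finset.mem_univ, true_and]
  constructor
  · rintro ⟨L, hL, hzL, hP⟩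
    have hLS : ((Finset.univ.filter (· ∈ L) : Finset V) : Set V) = L := by simp
    refine ⟨_, ⟨(finrank_eq_two_iff_card_eq_four hLS).1 hL, ?_, ?_, ?_⟩, hLS ▸ hP⟩
    · simp
    · simpa using hzL
    · simpa using fun a ha b hb => L.add_mem ha hb
  · rintro ⟨S, ⟨hcard, h0, hz, hadd⟩, hP⟩
    let L : Submodule (ZMod 2) V :=
      { carrier := S
        add_mem' := fun ha hb => hadd _ ha _ hb
        zero_mem' := h0
        smul_mem' := fun c x hx => by
          rcases ZMod.eq_zero_or_eq_one c with rfl | rfl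
          · simpa using h0
          · simpa using hx }
    exact ⟨L, (finrank_eq_two_iff_card_eq_four rfl).2 hcard, hz, hP⟩

theorem outerSpanCandidates_eq_coe (z : V) :
    outerSpanCandidates z = ↑(outerSpanCandidateFinset z) := by
  ext f
  rw [outerSpanCandidates, Set.mem_ofPred_eq, exists_submodule_finrank_two_iff z
    fun S => f = S.indicator 1 ∨ f = Sᶜ.indicator 1, outerIndicators_eq_coe_image]
  simp [outerSpanCandidateFinset, Finset.piecewise_zero_eq_indicator, eq_comm, and_or_left,
    exists_or]

end Finite

theorem coe_span_outerIndicators_single :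
    (span (ZMod 2) (outerIndicators (Pi.single 0 1 : Fin 3 → ZMod 2)) :
      Set ((Fin 3 → ZMod 2) → ZMod 2)) = outerSpanCandidates (Pi.single 0 1 : Fin 3 → ZMod 2) := by
  rw [outerIndicators_eq_coe_image, ZModModule.coe_span_finset_eq_image_sum,
    outerSpanCandidates_eq_coe, Finset.coe_inj]
  decide +kernel

theorem exists_linearEquiv_apply_eq_single {K V : Type*} [Field K] [AddCommGroup V] [Module K V]
    [FiniteDimensional K V] {n : ℕ} (hV : finrank K V = n + 1) {z : V} (hz : z ≠ 0) :
    ∃ e : V ≃ₗ[K] (Fin (n + 1) → K), e z = Pi.single 0 1 := by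
  have hli : LinearIndepOn K id ({z} : Set V) := (linearIndepOn_singleton_iff K).2 hz
  let b := Basis.extend hli
  let z' : hli.extend (Set.subset_univ _) := ⟨z, hli.subset_extend _ rfl⟩
  have hcard : Fintype.card (hli.extend (Set.subset_univ _)) = n + 1 := by
    rw [← finrank_eq_card_basis b, hV]
  let σ := (Fintype.equivFinOfCardEq hcard).trans
    (Equiv.swap (Fintype.equivFinOfCardEq hcard z') 0)
  refine ⟨(b.reindex σ).equivFun, ?_⟩
  have hb : b.reindex σ 0 = z := by
    simp [σ, b, z', Basis.reindex_apply]
  calc (b.reindex σ).equivFun z = (b.reindex σ).equivFun (b.reindex σ 0) := by rw [hb]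
    _ = Pi.single 0 1 := by
      ext j
      simp only [Basis.equivFun_self, Pi.single_apply, eq_comm]

theorem coe_span_outerIndicators_of_finrank_eq_three {V : Type*} [AddCommGroup V]
    [Module (ZMod 2) V] [FiniteDimensional (ZMod 2) V] (hV : finrank (ZMod 2) V = 3) {z : V}
    (hz : z ≠ 0) :
    (span (ZMod 2) (outerIndicators z) : Set (V → ZMod 2)) = outerSpanCandidates z := by
  obtain ⟨e, he⟩ := exists_linearEquiv_apply_eq_single hV hz
  apply coe_span_outerIndicators_of_linearEquiv e
  rw [he]
  exact coe_span_outerIndicators_single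

theorem ind_eq_indicator (S : Set F8) : ind S = S.indicator 1 := by
  ext w
  simp [ind, Set.indicator_apply]

theorem span_outer_sets_description (z : F8) (hz : z ≠ 0) :
    let Oz : Set (F8 → ZMod 2) :=
      {f | ∃ X : Finset F8, X.card = 4 ∧ ∑ x ∈ X, x = z ∧ f = ind X}
    ∀ f : F8 → ZMod 2, f ∈ Submodule.span (ZMod 2) Oz ↔
      (f = 0 ∨ f = ind Set.univ ∨ f ∈ Oz ∨
        ∃ L : Submodule (ZMod 2) F8, Module.finrank (ZMod 2) L = 2 ∧ z ∈ L ∧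
          (f = ind L ∨ f = ind ((L : Set F8)ᶜ))) := by
  intro Oz f
  have hspan := coe_span_outerIndicators_of_finrank_eq_three
    (GaloisField.finrank 2 (by norm_num : 3 ≠ 0)) hz
  simp only [Oz, ind_eq_indicator, Set.indicator_univ]
  exact Set.ext_iff.1 hspan f
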